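/- Let T be an odometer on (X, m_X) and let φ, ψ: X → ℤ/2ℤ be measurable cocycles such that T_φ and T_ψ are ergodic. Then either T_φ and T_ψ are measure-theoretically isomorphic, or the set of ergodic joinings of T_φ and T_ψ equals exactly the set of measures of the form: the pushforward of m_X ⊗ m_{ℤ/2ℤ} ⊗ m_{ℤ/2ℤ} under (x, g, h) ↦ ((x, g), (Rx, h)), where R ranges over the centralizer C(T) (i.e., the relatively independent extensions of the graph joinings of T). -/

import Mathlib

open MeasureTheory

instance (k : ℕ) : MeasurableSpace (ZMod k) := ⊤

instance (k : ℕ) : MeasurableSingletonClass (ZMod k) :=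
  ⟨fun _ => MeasurableSpace.measurableSet_top⟩

/-- `nseq lam t = λ_0 ⋯ λ_{t-1}`, the heights `n_t` of the odometer towers. -/
def nseq (lam : ℕ → ℕ) : ℕ → ℕ
  | 0 => 1
  | t + 1 => nseq lam t * lam t

theorem nseq_dvd (lam : ℕ → ℕ) (t : ℕ) : nseq lam t ∣ nseq lam (t + 1) := ⟨lam t, rfl⟩

/-- The odometer group: the inverse limit of the groups `ℤ/n_tℤ`. -/
def odoGroup (lam : ℕ → ℕ) : AddSubgroup (Π t : ℕ, ZMod (nseq lam t)) where
  carrier := {x | ∀ t : ℕ, ZMod.castHom (nseq_dvd lam t) (ZMod (nseq lam t)) (x (t + 1)) = x t}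
  add_mem' := by intro a b ha hb t; simp only [Pi.add_apply, map_add, ha t, hb t]
  zero_mem' := by intro t; simp
  neg_mem' := by intro a ha t; simp only [Pi.neg_apply, map_neg, ha t]

/-- The element `θ = (1, 1, 1, …)` of the odometer group. -/
def odoTheta (lam : ℕ → ℕ) : odoGroup lam :=
  ⟨fun _ => 1, fun _ => map_one _⟩

/-- The odometer transformation: translation by `θ = (1, 1, 1, …)`. -/
def odoT (lam : ℕ → ℕ) : odoGroup lam → odoGroup lam := fun x => x + odoTheta lam

instance (n : ℕ) : Countable (ZMod n) := by
  cases n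
  · exact inferInstanceAs (Countable ℤ)
  · exact inferInstanceAs (Countable (Fin _))

section OdoHelpers

variable {lam : ℕ → ℕ}

lemma nseq_pos (hlam : ∀ t, 2 ≤ lam t) (t : ℕ) : 0 < nseq lam t := by
  induction t with
  | zero => exact Nat.one_pos
  | succ t ih => exact Nat.mul_pos ih (lt_of_lt_of_le (by norm_num) (hlam t))

lemma measurable_odo_coord (t : ℕ) :
    Measurable fun x : odoGroup lam => (x : Π s : ℕ, ZMod (nseq lam s)) t :=
  (measurable_pi_apply t).comp measurable_subtype_coe

lemma measurable_into_odo {α : Type*} [MeasurableSpace α] {f : α → odoGroup lam}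
    (h : ∀ t, Measurable fun a => ((f a : Π s : ℕ, ZMod (nseq lam s)) t)) : Measurable f := by
  have hcoe : Measurable fun a => ((f a : Π s : ℕ, ZMod (nseq lam s))) := measurable_pi_iff.2 h
  exact Measurable.subtype_mk hcoe

lemma measurable_odo_add (c : odoGroup lam) : Measurable fun x : odoGroup lam => x + c := by
  refine measurable_into_odo fun t => ?_
  have : (fun x : odoGroup lam => ((x + c : odoGroup lam) : Π s : ℕ, ZMod (nseq lam s)) t)
      = fun x : odoGroup lam => (x : Π s : ℕ, ZMod (nseq lam s)) t
        + (c : Π s : ℕ, ZMod (nseq lam s)) t := rfl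
  rw [this]
  exact (measurable_of_countable
    (fun v : ZMod (nseq lam t) => v + (c : Π s : ℕ, ZMod (nseq lam s)) t)).comp
    (measurable_odo_coord t)

lemma measurable_odo_sub (c : odoGroup lam) : Measurable fun x : odoGroup lam => x - c := by
  simpa [sub_eq_add_neg] using measurable_odo_add (-c)

lemma measurable_odoT : Measurable (odoT lam) := measurable_odo_add (odoTheta lam)

end OdoHelpers


/-- A map is invertible modulo null sets. -/
def QuasiInvertible {α : Type*} [MeasurableSpace α] (S : α → α) (m : Measure α) : Prop :=
  ∃ W : α → α, MeasurePreserving W m m ∧ (W ∘ S =ᵐ[m] id) ∧ (S ∘ W =ᵐ[m] id)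

/-- The centralizer of a measure-preserving transformation `R`. -/
def Centralizer {α : Type*} [MeasurableSpace α] (R : α → α) (m : Measure α) :
    Set (α → α) :=
  {S | MeasurePreserving S m m ∧ QuasiInvertible S m ∧ S ∘ R =ᵐ[m] R ∘ S}

/-- Two measure-preserving systems (on the same measure space) are measure-theoretically
isomorphic. -/
def MeasIso {α : Type*} [MeasurableSpace α] (R₁ R₂ : α → α) (m : Measure α) : Prop :=
  ∃ Φ : α → α, MeasurePreserving Φ m m ∧ QuasiInvertible Φ m ∧ Φ ∘ R₁ =ᵐ[m] R₂ ∘ Φ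

/-- The uniform (Haar) probability measure on `ℤ/2ℤ`. -/
noncomputable def m2 : Measure (ZMod 2) := (2 : ENNReal)⁻¹ • Measure.count


lemma zmod2_cases : ∀ a : ZMod 2, a = 0 ∨ a = 1 := by decide

lemma zmod2_add_self (a : ZMod 2) : a + a = 0 := by
  rcases zmod2_cases a with h | h <;> subst h <;> decide

lemma measure_eq_of_singletons {β : Type*} [MeasurableSpace β] [Countable β]
    [MeasurableSingletonClass β] {μ ν : Measure β} (h : ∀ b, μ {b} = ν {b}) : μ = ν := by
  ext s hs
  have hdec : s = ⋃ b ∈ s, {b} := by simp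
  rw [hdec, measure_biUnion (Set.to_countable s) ?hd (fun b _ => measurableSet_singleton b),
    measure_biUnion (Set.to_countable s) ?hd2 (fun b _ => measurableSet_singleton b)]
  · exact tsum_congr fun b => h b
  case hd => exact fun i _ j _ hij => by simp [Set.disjoint_singleton, hij]
  case hd2 => exact fun i _ j _ hij => by simp [Set.disjoint_singleton, hij]

@[simp] lemma m2_singleton (a : ZMod 2) : m2 {a} = 2⁻¹ := by
  simp [m2, Measure.count_singleton]

instance : IsProbabilityMeasure m2 := by
  constructor
  have : (Set.univ : Set (ZMod 2)) = {0} ∪ {1} := by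
    ext a; rcases zmod2_cases a with h | h <;> subst h <;> simp
  rw [this, measure_union (by simp [Set.disjoint_singleton]) (measurableSet_singleton 1)]
  rw [m2_singleton, m2_singleton, ENNReal.inv_two_add_inv_two]

lemma preimage_add_singleton {G : Type*} [AddCommGroup G] (a b : G) :
    (fun g : G => a + g) ⁻¹' {b} = {b - a} := by
  ext g
  simp only [Set.mem_preimage, Set.mem_singleton_iff, sub_eq_add_neg]
  constructor
  · rintro rfl; abel
  · rintro rfl; abel

lemma m2_map_add (a : ZMod 2) : Measure.map (fun g => a + g) m2 = m2 := by
  refine measure_eq_of_singletons fun b => ?_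
  rw [Measure.map_apply (measurable_of_countable _) (measurableSet_singleton b),
    preimage_add_singleton, m2_singleton, m2_singleton]

@[simp] lemma m22_singleton (p : ZMod 2 × ZMod 2) : (m2.prod m2) {p} = 4⁻¹ := by
  have : ({p} : Set (ZMod 2 × ZMod 2)) = {p.1} ×ˢ {p.2} := by simp
  rw [this, Measure.prod_prod, m2_singleton, m2_singleton,
    ← ENNReal.mul_inv (by norm_num) (by norm_num)]
  norm_num

lemma m22_map_add (a : ZMod 2 × ZMod 2) :
    Measure.map (fun g => a + g) (m2.prod m2) = m2.prod m2 := by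
  refine measure_eq_of_singletons fun b => ?_
  rw [Measure.map_apply (measurable_of_countable _) (measurableSet_singleton b),
    preimage_add_singleton, m22_singleton, m22_singleton]
section Skew

open Set

variable {α G : Type*} [MeasurableSpace α] [MeasurableSpace G] [AddCommGroup G]
  [Countable G] [MeasurableSingletonClass G]

/-- Skew products over a measure-preserving base with translation-invariant fiber
measure are measure preserving. -/
lemma skew_measurePreserving {μ : Measure α} {μG : Measure G} [SFinite μ] [SFinite μG]
    {e : α → α} (he : MeasurePreserving e μ μ) {σ : α → G} (hσ : Measurable σ)
    (hG : ∀ a, Measure.map (fun g => a + g) μG = μG) :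
    MeasurePreserving (fun p : α × G => (e p.1, σ p.1 + p.2)) (μ.prod μG) (μ.prod μG) := by
  have hm : Measurable fun p : α × G => (e p.1, σ p.1 + p.2) := by
    refine Measurable.prodMk (he.measurable.comp measurable_fst) ?_
    exact (measurable_of_countable fun q : G × G => q.1 + q.2).comp
      ((hσ.comp measurable_fst).prodMk measurable_snd)
  refine ⟨hm, ?_⟩
  ext s hs
  rw [Measure.map_apply hm hs, Measure.prod_apply (hm hs), Measure.prod_apply hs]
  have hfib : ∀ x : α, μG (Prod.mk x ⁻¹' ((fun p : α × G => (e p.1, σ p.1 + p.2)) ⁻¹' s))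
      = μG (Prod.mk (e x) ⁻¹' s) := by
    intro x
    have h1 : Prod.mk x ⁻¹' ((fun p : α × G => (e p.1, σ p.1 + p.2)) ⁻¹' s)
        = (fun g => σ x + g) ⁻¹' (Prod.mk (e x) ⁻¹' s) := rfl
    rw [h1, ← Measure.map_apply (measurable_of_countable _) (measurable_prodMk_left hs),
      hG (σ x)]
  calc ∫⁻ x, μG (Prod.mk x ⁻¹' ((fun p : α × G => (e p.1, σ p.1 + p.2)) ⁻¹' s)) ∂μ
      = ∫⁻ x, μG (Prod.mk (e x) ⁻¹' s) ∂μ := by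
        exact lintegral_congr fun x => hfib x
    _ = ∫⁻ y, μG (Prod.mk y ⁻¹' s) ∂μ := he.lintegral_comp (measurable_measure_prodMk_left hs)

end Skew

section ErgTransfer

variable {α β : Type*} [MeasurableSpace α] [MeasurableSpace β]

/-- Pushing an ergodic system forward along an exactly equivariant map gives an
ergodic system. -/
lemma Ergodic.map_of_comm {e : α → α} {μ : Measure α} (he : Ergodic e μ)
    {π : α → β} {S : β → β} (hπ : Measurable π) (hS : Measurable S)
    (hcomm : ∀ a, π (e a) = S (π a)) : Ergodic S (Measure.map π μ) := by
  have hmap : Measure.map S (Measure.map π μ) = Measure.map π μ := by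
    rw [Measure.map_map hS hπ]
    have : S ∘ π = π ∘ e := by funext a; simp [Function.comp, hcomm a]
    rw [this, ← Measure.map_map hπ he.measurable, he.map_eq]
  refine ⟨⟨hS, hmap⟩, ⟨?_⟩⟩
  intro s hs hsinv
  have hπs : MeasurableSet (π ⁻¹' s) := hπ hs
  have hinv' : e ⁻¹' (π ⁻¹' s) = π ⁻¹' s := by
    have : π ⁻¹' (S ⁻¹' s) = e ⁻¹' (π ⁻¹' s) := by
      ext a; simp [Set.mem_preimage, hcomm a]
    rw [← this, hsinv]
  rcases he.ae_empty_or_univ hπs hinv' with h | h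
  · refine Filter.eventuallyConst_set.2 (Or.inr ?_)
    rw [ae_eq_empty] at h
    have : (Measure.map π μ) s = 0 := by rw [Measure.map_apply hπ hs]; exact h
    exact (Filter.eventuallyEq_set.1 (ae_eq_empty.2 this)).mono fun x hx => by simpa using hx
  · refine Filter.eventuallyConst_set.2 (Or.inl ?_)
    rw [ae_eq_univ] at h
    have : (Measure.map π μ) sᶜ = 0 := by
      rw [Measure.map_apply hπ hs.compl, Set.preimage_compl]; exact h
    exact (Filter.eventuallyEq_set.1 (ae_eq_univ.2 this)).mono fun x hx => by simpa using hx

end ErgTransfer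
section Const

open Set Filter

variable {α : Type*} [MeasurableSpace α] {e : α → α} {μ : Measure α}

lemma preimage_ae_invariant {β : Type*} {f : α → β}
    (hinv : (fun x => f (e x)) =ᵐ[μ] f) (s : Set β) :
    e ⁻¹' (f ⁻¹' s) =ᵐ[μ] f ⁻¹' s := by
  rw [Filter.eventuallyEq_set]
  filter_upwards [hinv] with x hx
  simp only [Set.mem_preimage, hx]

lemma ergodic_dich [IsProbabilityMeasure μ] (he : Ergodic e μ) {β : Type*}
    [MeasurableSpace β] {f : α → β} (hf : Measurable f)
    (hinv : (fun x => f (e x)) =ᵐ[μ] f) {s : Set β} (hs : MeasurableSet s) :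
    μ (f ⁻¹' s) = 0 ∨ μ (f ⁻¹' s) = 1 := by
  rcases he.quasiErgodic.ae_empty_or_univ₀ (hf hs).nullMeasurableSet
      (preimage_ae_invariant hinv s) with h | h
  · exact Or.inl (ae_eq_empty.1 h)
  · exact Or.inr ((measure_congr h).trans measure_univ)

lemma aeconst_zmod2 [IsProbabilityMeasure μ] (he : Ergodic e μ) {v : α → ZMod 2}
    (hv : Measurable v) (hinv : (fun x => v (e x)) =ᵐ[μ] v) :
    v =ᵐ[μ] (fun _ => 0) ∨ v =ᵐ[μ] (fun _ => 1) := by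
  rcases ergodic_dich he hv hinv (measurableSet_singleton (0 : ZMod 2)) with h | h
  · right
    refine (measure_eq_zero_iff_ae_notMem.1 h).mono fun x hx => ?_
    rcases zmod2_cases (v x) with h0 | h1
    · exact absurd h0 (by simpa using hx)
    · exact h1
  · left
    have hc : μ (v ⁻¹' {0})ᶜ = 0 := by
      rw [measure_compl (hv (measurableSet_singleton 0)) (measure_ne_top μ _), h]
      simp
    refine (measure_eq_zero_iff_ae_notMem.1 hc).mono fun x hx => ?_
    simpa using hx

lemma aeconst_odo {lam : ℕ → ℕ} (hlam : ∀ t, 2 ≤ lam t) [IsProbabilityMeasure μ]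
    (he : Ergodic e μ) {F : α → odoGroup lam} (hF : Measurable F)
    (hinv : (fun x => F (e x)) =ᵐ[μ] F) : ∃ c, F =ᵐ[μ] fun _ => c := by
  have key : ∀ t : ℕ, ∃ a : ZMod (nseq lam t),
      μ {x | (F x : Π s : ℕ, ZMod (nseq lam s)) t = a} = 1 := by
    intro t
    haveI : NeZero (nseq lam t) := ⟨(nseq_pos hlam t).ne'⟩
    set G : α → ZMod (nseq lam t) := fun x => (F x : Π s : ℕ, ZMod (nseq lam s)) t with hGdef
    have hGm : Measurable G := (measurable_odo_coord t).comp hF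
    have hGinv : (fun x => G (e x)) =ᵐ[μ] G := by
      filter_upwards [hinv] with x hx
      simp only [hGdef, hx]
    by_contra hno
    push_neg at hno
    have hall : ∀ a, μ (G ⁻¹' {a}) = 0 := fun a => by
      rcases ergodic_dich he hGm hGinv (measurableSet_singleton a) with h | h
      · exact h
      · exact absurd h (hno a)
    have hcover : (Set.univ : Set α) = ⋃ a : ZMod (nseq lam t), G ⁻¹' {a} := by
      ext x; simp [Set.mem_iUnion]
    have hle : μ (⋃ a : ZMod (nseq lam t), G ⁻¹' {a})
        ≤ ∑' a : ZMod (nseq lam t), μ (G ⁻¹' {a}) := measure_iUnion_le _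
    rw [← hcover, measure_univ] at hle
    simp only [hall, tsum_zero] at hle
    exact absurd hle (by simp)
  choose a ha using key
  have hmsb : ∀ t, MeasurableSet {x | (F x : Π s : ℕ, ZMod (nseq lam s)) t = a t} := by
    intro t
    exact ((measurable_odo_coord t).comp hF) (measurableSet_singleton (a t))
  have hccompl : μ (⋃ t, {x | (F x : Π s : ℕ, ZMod (nseq lam s)) t = a t}ᶜ) = 0 := by
    refine measure_iUnion_null fun t => ?_
    rw [measure_compl (hmsb t) (measure_ne_top μ _), ha t]
    simp
  set E : Set α := ⋂ t, {x | (F x : Π s : ℕ, ZMod (nseq lam s)) t = a t} with hEdef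
  have hEcompl : μ Eᶜ = 0 := by
    rw [hEdef, Set.compl_iInter]
    exact hccompl
  have hEne : E.Nonempty := by
    refine nonempty_of_measure_ne_zero (μ := μ) (s := E) ?_
    intro h0
    have : μ Set.univ ≤ μ E + μ Eᶜ := by
      rw [← Set.union_compl_self E]; exact measure_union_le _ _
    rw [measure_univ, h0, hEcompl] at this
    exact absurd this (by simp)
  obtain ⟨x₀, hx₀⟩ := hEne
  refine ⟨F x₀, ?_⟩
  have hsub : E ⊆ {x | F x = F x₀} := by
    intro x hx
    have hx' : ∀ t, (F x : Π s : ℕ, ZMod (nseq lam s)) t = a t := by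
      intro t; exact Set.mem_iInter.1 hx t
    have hx0' : ∀ t, (F x₀ : Π s : ℕ, ZMod (nseq lam s)) t = a t := by
      intro t; exact Set.mem_iInter.1 hx₀ t
    have : (F x : Π s : ℕ, ZMod (nseq lam s)) = (F x₀ : Π s : ℕ, ZMod (nseq lam s)) := by
      funext t; rw [hx' t, hx0' t]
    exact Subtype.ext this
  have : μ {x | ¬ F x = F x₀} = 0 :=
    measure_mono_null (fun x hx => fun hxE => hx (hsub hxE)) hEcompl
  exact ae_iff.2 this

end Const
section AEOne

open Set Filter

variable {α : Type*} [MeasurableSpace α] {e : α → α} {μ : Measure α}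

lemma ae_one_of_invariant [IsProbabilityMeasure μ] (he : Ergodic e μ)
    {f : α → ENNReal} (hf : Measurable f) (hinv : (fun x => f (e x)) =ᵐ[μ] f)
    (hint : ∫⁻ x, f x ∂μ = 1) : f =ᵐ[μ] fun _ => 1 := by
  have hlt : μ (f ⁻¹' Set.Iio 1) = 0 := by
    rcases ergodic_dich he hf hinv measurableSet_Iio with h | h
    · exact h
    · exfalso
      -- the sublevel sets
      have hsub : f ⁻¹' Set.Iio 1 ⊆ ⋃ n : ℕ, f ⁻¹' Set.Iic (1 - ((n : ENNReal))⁻¹) := by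
        intro x hx
        have hx' : f x < 1 := hx
        have h1 : (1 : ENNReal) - f x ≠ 0 := by
          simpa [tsub_eq_zero_iff_le] using not_le.2 hx'
        obtain ⟨n, hn⟩ := ENNReal.exists_inv_nat_lt h1
        refine Set.mem_iUnion.2 ⟨n, ?_⟩
        have : f x + ((n : ENNReal))⁻¹ ≤ 1 := by
          calc f x + ((n : ENNReal))⁻¹ ≤ f x + (1 - f x) := add_le_add_right hn.le _
            _ = 1 := add_tsub_cancel_of_le hx'.le
        have hn0 : ((n : ENNReal))⁻¹ ≠ ⊤ := by
          intro htop
          rw [htop] at hn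
          exact absurd hn (by simp)
        exact ENNReal.le_sub_of_add_le_right hn0 this
      have hpos : ∃ n : ℕ, μ (f ⁻¹' Set.Iic (1 - ((n : ENNReal))⁻¹)) ≠ 0 := by
        by_contra hno
        push_neg at hno
        have := measure_mono (μ := μ) hsub
        rw [h] at this
        have hz : ∑' n : ℕ, μ (f ⁻¹' Set.Iic (1 - ((n : ENNReal))⁻¹)) = 0 := by
          simp [hno]
        have hle2 := measure_iUnion_le (μ := μ) (fun n : ℕ => f ⁻¹' Set.Iic (1 - ((n : ENNReal))⁻¹))
        rw [hz] at hle2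
        exact absurd (this.trans hle2) (by simp)
      obtain ⟨n, hn⟩ := hpos
      have h1 : μ (f ⁻¹' Set.Iic (1 - ((n : ENNReal))⁻¹)) = 1 := by
        rcases ergodic_dich he hf hinv measurableSet_Iic with h' | h'
        · exact absurd h' hn
        · exact h'
      -- restrict to the conull sublevel set
      have hres : μ.restrict (f ⁻¹' Set.Iic (1 - ((n : ENNReal))⁻¹)) = μ := by
        have hc : μ (f ⁻¹' Set.Iic (1 - ((n : ENNReal))⁻¹))ᶜ = 0 := by
          rw [measure_compl (hf measurableSet_Iic) (measure_ne_top μ _), h1]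
          simp
        rw [Measure.restrict_congr_set (ae_eq_univ.2 hc), Measure.restrict_univ]
      have hle : (1 : ENNReal) ≤ 1 - ((n : ENNReal))⁻¹ := by
        calc (1 : ENNReal) = ∫⁻ x, f x ∂μ := hint.symm
          _ = ∫⁻ x in f ⁻¹' Set.Iic (1 - ((n : ENNReal))⁻¹), f x ∂μ := by rw [hres]
          _ ≤ ∫⁻ _ in f ⁻¹' Set.Iic (1 - ((n : ENNReal))⁻¹), (1 - ((n : ENNReal))⁻¹) ∂μ := by
              refine setLIntegral_mono measurable_const fun x hx => hx
          _ = (1 - ((n : ENNReal))⁻¹) * μ (f ⁻¹' Set.Iic (1 - ((n : ENNReal))⁻¹)) := by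
              rw [setLIntegral_const]
          _ = 1 - ((n : ENNReal))⁻¹ := by rw [h1, mul_one]
      have : (1 : ENNReal) - ((n : ENNReal))⁻¹ < 1 :=
        ENNReal.sub_lt_self ENNReal.one_ne_top one_ne_zero
          (ENNReal.inv_ne_zero.2 (ENNReal.natCast_ne_top n))
      exact absurd (hle.trans_lt this) (lt_irrefl _)
  have hgt : μ (f ⁻¹' Set.Ioi 1) = 0 := by
    rcases ergodic_dich he hf hinv measurableSet_Ioi with h | h
    · exact h
    · exfalso
      have hsub : f ⁻¹' Set.Ioi 1 ⊆ ⋃ n : ℕ, f ⁻¹' Set.Ici (1 + ((n : ENNReal))⁻¹) := by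
        intro x hx
        have hx' : (1 : ENNReal) < f x := hx
        have h1 : f x - 1 ≠ 0 := by
          simpa [tsub_eq_zero_iff_le] using not_le.2 hx'
        obtain ⟨n, hn⟩ := ENNReal.exists_inv_nat_lt h1
        refine Set.mem_iUnion.2 ⟨n, ?_⟩
        have : (1 : ENNReal) + ((n : ENNReal))⁻¹ ≤ f x := by
          calc (1 : ENNReal) + ((n : ENNReal))⁻¹ ≤ 1 + (f x - 1) := add_le_add_right hn.le _
            _ = f x := add_tsub_cancel_of_le hx'.le
        exact this
      have hpos : ∃ n : ℕ, μ (f ⁻¹' Set.Ici (1 + ((n : ENNReal))⁻¹)) ≠ 0 := by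
        by_contra hno
        push_neg at hno
        have := measure_mono (μ := μ) hsub
        rw [h] at this
        have hz : ∑' n : ℕ, μ (f ⁻¹' Set.Ici (1 + ((n : ENNReal))⁻¹)) = 0 := by
          simp [hno]
        have hle2 := measure_iUnion_le (μ := μ) (fun n : ℕ => f ⁻¹' Set.Ici (1 + ((n : ENNReal))⁻¹))
        rw [hz] at hle2
        exact absurd (this.trans hle2) (by simp)
      obtain ⟨n, hn⟩ := hpos
      have h1 : μ (f ⁻¹' Set.Ici (1 + ((n : ENNReal))⁻¹)) = 1 := by
        rcases ergodic_dich he hf hinv measurableSet_Ici with h' | h'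
        · exact absurd h' hn
        · exact h'
      have hge : (1 : ENNReal) + ((n : ENNReal))⁻¹ ≤ 1 := by
        calc (1 : ENNReal) + ((n : ENNReal))⁻¹
            = (1 + ((n : ENNReal))⁻¹) * μ (f ⁻¹' Set.Ici (1 + ((n : ENNReal))⁻¹)) := by
              rw [h1, mul_one]
          _ = ∫⁻ _ in f ⁻¹' Set.Ici (1 + ((n : ENNReal))⁻¹), (1 + ((n : ENNReal))⁻¹) ∂μ := by
              rw [setLIntegral_const]
          _ ≤ ∫⁻ x in f ⁻¹' Set.Ici (1 + ((n : ENNReal))⁻¹), f x ∂μ := by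
              refine setLIntegral_mono hf fun x hx => hx
          _ ≤ ∫⁻ x, f x ∂μ := setLIntegral_le_lintegral _ _
          _ = 1 := hint
      have : ((n : ENNReal))⁻¹ ≤ 0 := by
        have h2 : (1 : ENNReal) + ((n : ENNReal))⁻¹ ≤ 1 + 0 := by simpa using hge
        exact ENNReal.le_of_add_le_add_left ENNReal.one_ne_top h2
      exact absurd (le_antisymm this zero_le)
        (ENNReal.inv_ne_zero.2 (ENNReal.natCast_ne_top n))
  refine ae_iff.2 ?_
  refine measure_mono_null (fun x hx => ?_) (measure_union_null hlt hgt)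
  rcases lt_or_gt_of_ne (hx : ¬ f x = 1) with h | h
  · exact Or.inl h
  · exact Or.inr h

end AEOne
section MainLemmas

open Set Filter

set_option linter.unusedSectionVars false

variable {lam : ℕ → ℕ} {mX : Measure (odoGroup lam)} [IsProbabilityMeasure mX]

lemma mp_translate (hHaar : ∀ g : odoGroup lam, Measure.map (fun x => x + g) mX = mX)
    (c : odoGroup lam) : MeasurePreserving (fun x : odoGroup lam => x + c) mX mX :=
  ⟨measurable_odo_add c, hHaar c⟩

lemma mp_odoT (hHaar : ∀ g : odoGroup lam, Measure.map (fun x => x + g) mX = mX) :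
    MeasurePreserving (odoT lam) mX mX :=
  ⟨measurable_odoT, hHaar (odoTheta lam)⟩

lemma ae_translate (hHaar : ∀ g : odoGroup lam, Measure.map (fun x => x + g) mX = mX)
    (c : odoGroup lam) {p : odoGroup lam → Prop} (hp : ∀ᵐ x ∂mX, p x) :
    ∀ᵐ y ∂mX, p (y + c) := by
  rw [ae_iff] at hp ⊢
  exact (mp_translate hHaar c).quasiMeasurePreserving.preimage_null hp

lemma ae_odoT (hHaar : ∀ g : odoGroup lam, Measure.map (fun x => x + g) mX = mX)
    {p : odoGroup lam → Prop} (hp : ∀ᵐ x ∂mX, p x) :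
    ∀ᵐ y ∂mX, p (odoT lam y) := by
  rw [ae_iff] at hp ⊢
  exact (mp_odoT hHaar).quasiMeasurePreserving.preimage_null hp

lemma ergodic_odoT {φ : odoGroup lam → ZMod 2}
    (hTφ : Ergodic (fun p : odoGroup lam × ZMod 2 => (odoT lam p.1, φ p.1 + p.2))
      (mX.prod m2)) :
    Ergodic (odoT lam) mX := by
  have hfst : Measure.map Prod.fst (mX.prod m2) = mX := by
    rw [Measure.map_fst_prod]; simp
  have := Ergodic.map_of_comm hTφ measurable_fst measurable_odoT (fun p => rfl)
  rwa [hfst] at this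

lemma zmod2_solve {a b c : ZMod 2} (h : a + b = c) : b = a + c := by
  rw [← h, ← add_assoc, zmod2_add_self, zero_add]

/-- If an ergodic cocycle `ψ` is (a translate of) a coboundary, contradiction. -/
lemma no_coboundary {ψ : odoGroup lam → ZMod 2} (hψ : Measurable ψ)
    (hHaar : ∀ g : odoGroup lam, Measure.map (fun x => x + g) mX = mX)
    (hTψ : Ergodic (fun p : odoGroup lam × ZMod 2 => (odoT lam p.1, ψ p.1 + p.2))
      (mX.prod m2))
    (c : odoGroup lam) {u : odoGroup lam → ZMod 2} (hu : Measurable u)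
    (hcob : ∀ᵐ x ∂mX, u (odoT lam x) = ψ (x + c) + u x) : False := by
  classical
  set v : odoGroup lam → ZMod 2 := fun y => u (y - c) with hvdef
  have hvm : Measurable v := hu.comp (measurable_odo_sub c)
  have hvcob : ∀ᵐ y ∂mX, v (odoT lam y) = ψ y + v y := by
    have := ae_translate hHaar (-c) hcob
    filter_upwards [this] with y hy
    have h1 : y + -c + c = y := by abel
    have h2 : odoT lam (y + -c) = odoT lam y - c := by
      show y + -c + odoTheta lam = odoT lam y - c
      show y + -c + odoTheta lam = y + odoTheta lam - c
      abel
    rw [h1, h2] at hy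
    simpa [hvdef, sub_eq_add_neg] using hy
  -- the invariant set {(y, h) | h = v y} has measure 1/2
  set D : Set (odoGroup lam × ZMod 2) := {q | q.2 = v q.1} with hDdef
  have hDm : MeasurableSet D := by
    have : D = (fun q : odoGroup lam × ZMod 2 => q.2 - v q.1) ⁻¹' {0} := by
      ext q; simp [hDdef, sub_eq_zero]
    rw [this]
    exact ((measurable_of_countable fun p : ZMod 2 × ZMod 2 => p.1 - p.2).comp
      (measurable_snd.prodMk (hvm.comp measurable_fst)))
      (measurableSet_singleton 0)
  have hDinv : (fun q : odoGroup lam × ZMod 2 => (odoT lam q.1, ψ q.1 + q.2)) ⁻¹' D =ᵐ[mX.prod m2] D := by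
    rw [Filter.eventuallyEq_set]
    have hgood : ∀ᵐ q ∂(mX.prod m2), v (odoT lam q.1) = ψ q.1 + v q.1 := by
      have hbad : (mX.prod m2) ({y | ¬ v (odoT lam y) = ψ y + v y} ×ˢ (Set.univ : Set (ZMod 2))) = 0 := by
        rw [Measure.prod_prod]
        have : mX {y | ¬ v (odoT lam y) = ψ y + v y} = 0 := ae_iff.1 hvcob
        rw [this, zero_mul]
      rw [ae_iff]
      refine measure_mono_null (fun q hq => ?_) hbad
      exact ⟨hq, trivial⟩
    filter_upwards [hgood] with q hq
    simp only [Set.mem_preimage, hDdef, Set.mem_setOf_eq]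
    constructor
    · intro h
      rw [hq] at h
      exact add_left_cancel h
    · intro h
      rw [hq, h]
  have hdich := (hTψ.quasiErgodic.ae_empty_or_univ₀ hDm.nullMeasurableSet hDinv)
  have hDmeas : (mX.prod m2) D = 2⁻¹ := by
    rw [Measure.prod_apply hDm]
    have : ∀ y : odoGroup lam, m2 (Prod.mk y ⁻¹' D) = 2⁻¹ := by
      intro y
      have : Prod.mk y ⁻¹' D = {v y} := by
        ext h; simp [hDdef]
      rw [this, m2_singleton]
    rw [lintegral_congr this, lintegral_const, measure_univ, mul_one]
  rcases hdich with h | h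
  · rw [ae_eq_empty] at h
    rw [h] at hDmeas
    exact absurd hDmeas.symm (by norm_num)
  · have := (measure_congr h).trans measure_univ
    rw [hDmeas] at this
    exact absurd this (by norm_num)

end MainLemmas
section RelProd

open Set Filter

set_option linter.unusedSectionVars false
set_option synthInstance.maxHeartbeats 1000000
set_option maxHeartbeats 1000000

variable {lam : ℕ → ℕ} {mX : Measure (odoGroup lam)} [IsProbabilityMeasure mX]

lemma eventuallyConst_of_measure_01 {β : Type*} [MeasurableSpace β] {μ : Measure β}
    [IsProbabilityMeasure μ] {s : Set β} (hs : MeasurableSet s)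
    (h : μ s = 0 ∨ μ s = 1) : Filter.EventuallyConst s (ae μ) := by
  rcases h with h | h
  · refine Filter.eventuallyConst_set.2 (Or.inr ?_)
    exact (Filter.eventuallyEq_set.1 (ae_eq_empty.2 h)).mono fun x hx => by simpa using hx
  · refine Filter.eventuallyConst_set.2 (Or.inl ?_)
    have hc : μ sᶜ = 0 := by rw [measure_compl hs (measure_ne_top μ _), h]; simp
    exact (Filter.eventuallyEq_set.1 (ae_eq_univ.2 hc)).mono fun x hx => by simpa using hx

/-- Ergodicity of the relative product skew system: the `(ℤ/2)²`-extension of the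
odometer by the cocycle `x ↦ (φ x, ψ (x + c))`. -/
lemma relProd_ergodic {φ ψ : odoGroup lam → ZMod 2} (hφ : Measurable φ) (hψ : Measurable ψ)
    (hHaar : ∀ g : odoGroup lam, Measure.map (fun x => x + g) mX = mX)
    (hTφ : Ergodic (fun p : odoGroup lam × ZMod 2 => (odoT lam p.1, φ p.1 + p.2)) (mX.prod m2))
    (hTψ : Ergodic (fun p : odoGroup lam × ZMod 2 => (odoT lam p.1, ψ p.1 + p.2)) (mX.prod m2))
    (hnc : ∀ (c : odoGroup lam) (f : odoGroup lam → ZMod 2), Measurable f →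
      ¬ (∀ᵐ x ∂mX, f (odoT lam x) = f x + φ x + ψ (x + c)))
    (c : odoGroup lam) :
    Ergodic (fun p : odoGroup lam × (ZMod 2 × ZMod 2) =>
        (odoT lam p.1, ((φ p.1, ψ (p.1 + c)) : ZMod 2 × ZMod 2) + p.2))
      (mX.prod (m2.prod m2)) := by
  classical
  set T := odoT lam with hTdef
  set Tφ : odoGroup lam × ZMod 2 → odoGroup lam × ZMod 2 :=
    fun p => (T p.1, φ p.1 + p.2) with hTφdef
  set S : odoGroup lam × (ZMod 2 × ZMod 2) → odoGroup lam × (ZMod 2 × ZMod 2) :=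
    fun p => (T p.1, ((φ p.1, ψ (p.1 + c)) : ZMod 2 × ZMod 2) + p.2) with hSdef
  have hσm : Measurable fun x : odoGroup lam => ((φ x, ψ (x + c)) : ZMod 2 × ZMod 2) := by
    exact hφ.prodMk (hψ.comp (measurable_odo_add c))
  have hSmp : MeasurePreserving S (mX.prod (m2.prod m2)) (mX.prod (m2.prod m2)) :=
    skew_measurePreserving (mp_odoT hHaar) hσm m22_map_add
  refine ⟨hSmp, ⟨?_⟩⟩
  intro s hs hsinv
  refine eventuallyConst_of_measure_01 hs ?_
  -- the fibers of `s` over `(x, g)`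
  set A : ZMod 2 → Set (odoGroup lam × ZMod 2) := fun k => {q | (q.1, (q.2, k)) ∈ s} with hAdef
  have hAm : ∀ k, MeasurableSet (A k) := by
    intro k
    have : A k = (fun q : odoGroup lam × ZMod 2 => (q.1, (q.2, k))) ⁻¹' s := rfl
    rw [this]
    exact (measurable_fst.prodMk (measurable_snd.prodMk measurable_const)) hs
  have hmem : ∀ (x : odoGroup lam) (g k : ZMod 2),
      ((x, (g, k)) ∈ s ↔ (T x, (φ x + g, ψ (x + c) + k)) ∈ s) := by
    intro x g k
    have hpt : S (x, (g, k)) = (T x, (φ x + g, ψ (x + c) + k)) := by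
      simp [hSdef, Prod.mk_add_mk]
    constructor
    · intro h
      have : (x, (g, k)) ∈ S ⁻¹' s := by rw [hsinv]; exact h
      rwa [Set.mem_preimage, hpt] at this
    · intro h
      have : (x, (g, k)) ∈ S ⁻¹' s := by rw [Set.mem_preimage, hpt]; exact h
      rwa [hsinv] at this
  -- membership iteration: `Tφ q ∈ A k ↔ q ∈ A (ψ' + k)`
  have hiter : ∀ (x : odoGroup lam) (g k : ZMod 2), (Tφ (x, g) ∈ A k ↔ (x, g) ∈ A (ψ (x + c) + k)) := by
    intro x g k
    have h1 : ((x, (g, ψ (x + c) + k)) ∈ s ↔ (T x, (φ x + g, ψ (x + c) + (ψ (x + c) + k))) ∈ s) :=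
      hmem x g (ψ (x + c) + k)
    have h2 : ψ (x + c) + (ψ (x + c) + k) = k := by
      rw [← add_assoc, zmod2_add_self, zero_add]
    rw [h2] at h1
    exact Iff.symm h1
  set B : Set (odoGroup lam × ZMod 2) := A 0 ∩ A 1 with hBdef
  set C : Set (odoGroup lam × ZMod 2) := A 0 ∪ A 1 with hCdef
  have hBinv : Tφ ⁻¹' B = B := by
    ext q
    obtain ⟨x, g⟩ := q
    simp only [Set.mem_preimage, hBdef, Set.mem_inter_iff]
    rw [hiter x g 0, hiter x g 1]
    rcases zmod2_cases (ψ (x + c)) with h | h <;> rw [h]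
    · simp
    · have h1 : (1 : ZMod 2) + 0 = 1 := by decide
      have h2 : (1 : ZMod 2) + 1 = 0 := by decide
      rw [h1, h2]
      exact and_comm
  have hCinv : Tφ ⁻¹' C = C := by
    ext q
    obtain ⟨x, g⟩ := q
    simp only [Set.mem_preimage, hCdef, Set.mem_union]
    rw [hiter x g 0, hiter x g 1]
    rcases zmod2_cases (ψ (x + c)) with h | h <;> rw [h]
    · simp
    · have h1 : (1 : ZMod 2) + 0 = 1 := by decide
      have h2 : (1 : ZMod 2) + 1 = 0 := by decide
      rw [h1, h2]
      exact or_comm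
  have hBm : MeasurableSet B := (hAm 0).inter (hAm 1)
  have hCm : MeasurableSet C := (hAm 0).union (hAm 1)
  -- the projection X × (Z2 × Z2) → X × Z2
  set p13 : odoGroup lam × (ZMod 2 × ZMod 2) → odoGroup lam × ZMod 2 := Prod.map id Prod.fst with hp13def
  have hp13m : Measurable p13 := measurable_id.prodMap measurable_fst
  have hp13map : Measure.map p13 (mX.prod (m2.prod m2)) = mX.prod m2 := by
    rw [hp13def, ← Measure.map_prod_map _ _ measurable_id measurable_fst,
      Measure.map_id, Measure.map_fst_prod]
    simp
  rcases hTφ.ae_empty_or_univ hBm hBinv with hB0 | hB1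
  · rcases hTφ.ae_empty_or_univ hCm hCinv with hC0 | hC1
    · -- C null ⟹ s null
      left
      have hCnull : (mX.prod m2) C = 0 := ae_eq_empty.1 hC0
      have hsub : s ⊆ p13 ⁻¹' C := by
        rintro ⟨x, g, h⟩ hq
        have : (x, g) ∈ A h := hq
        rcases zmod2_cases h with hh | hh
        · rw [hh] at this; exact Or.inl this
        · rw [hh] at this; exact Or.inr this
      refine measure_mono_null hsub ?_
      have hpre : (mX.prod (m2.prod m2)) (p13 ⁻¹' C) = (mX.prod m2) C := by
        rw [← hp13map, Measure.map_apply hp13m hCm]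
      rw [hpre, hCnull]
    · -- C conull, B null: the graph case, contradiction
      exfalso
      have hB0' : (mX.prod m2) B = 0 := ae_eq_empty.1 hB0
      have hC1' : (mX.prod m2) Cᶜ = 0 := by
        have := ae_eq_univ.1 hC1
        exact this
      set G0 : Set (odoGroup lam × ZMod 2) := C \ B with hG0def
      have hG0m : MeasurableSet G0 := hCm.diff hBm
      have hG0c : (mX.prod m2) G0ᶜ = 0 := by
        have : G0ᶜ ⊆ Cᶜ ∪ B := by
          intro q hq
          simp only [hG0def, Set.mem_compl_iff, Set.mem_diff, not_and, not_not] at hq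
          by_cases hqC : q ∈ C
          · exact Or.inr (hq hqC)
          · exact Or.inl hqC
        exact measure_mono_null this (measure_union_null hC1' hB0')
      set G1 : Set (odoGroup lam × ZMod 2) := G0 ∩ Tφ ⁻¹' G0 with hG1def
      have hG1c : (mX.prod m2) G1ᶜ = 0 := by
        rw [hG1def, Set.compl_inter]
        refine measure_union_null hG0c ?_
        rw [← Set.preimage_compl]
        rw [hTφ.toMeasurePreserving.measure_preimage hG0m.compl.nullMeasurableSet]
        exact hG0c
      set f : odoGroup lam × ZMod 2 → ZMod 2 := fun q => if q ∈ A 1 then 1 else 0 with hfdef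
      have hfm : Measurable f := Measurable.ite (hAm 1) measurable_const measurable_const
      have hkey : ∀ q ∈ G0, q ∈ A (f q) ∧ ∀ k, q ∈ A k → k = f q := by
        intro q hq
        obtain ⟨hqC, hqB⟩ := hq
        by_cases hq1 : q ∈ A 1
        · have hf1 : f q = 1 := by simp [hfdef, hq1]
          refine ⟨by rw [hf1]; exact hq1, ?_⟩
          intro k hk
          rcases zmod2_cases k with hk0 | hk1
          · exfalso; apply hqB; exact ⟨by rw [hk0] at hk; exact hk, hq1⟩
          · rw [hk1, hf1]
        · have hq0 : q ∈ A 0 := by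
            rcases hqC with h | h
            · exact h
            · exact absurd h hq1
          have hf0 : f q = 0 := by simp [hfdef, hq1]
          refine ⟨by rw [hf0]; exact hq0, ?_⟩
          intro k hk
          rcases zmod2_cases k with hk0 | hk1
          · rw [hk0, hf0]
          · exfalso; apply hq1; rw [hk1] at hk; exact hk
      -- cocycle equation for f on G1
      have hfeq : ∀ q ∈ G1, f (Tφ q) = ψ (q.1 + c) + f q := by
        rintro ⟨x, g⟩ hq
        obtain ⟨hq0, hq1⟩ := hq
        have h1 : (x, g) ∈ A (f (x, g)) := (hkey _ hq0).1
        have h2 : Tφ (x, g) ∈ A (ψ (x + c) + f (x, g)) := by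
          rw [hiter x g (ψ (x + c) + f (x, g))]
          have : ψ (x + c) + (ψ (x + c) + f (x, g)) = f (x, g) := by
            rw [← add_assoc, zmod2_add_self, zero_add]
          rw [this]
          exact h1
        exact ((hkey _ hq1).2 _ h2).symm
      -- pass to a.e. statement in x for both fiber values
      have hboth : ∀ᵐ x ∂mX, ((x, (0 : ZMod 2)) ∈ G1 ∧ (x, (1 : ZMod 2)) ∈ G1) := by
        have hE : ∀ j : ZMod 2, mX {x : odoGroup lam | (x, j) ∉ G1} = 0 := by
          intro j
          have hsub : {x : odoGroup lam | (x, j) ∉ G1} ×ˢ ({j} : Set (ZMod 2)) ⊆ G1ᶜ := by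
            rintro ⟨y, k⟩ ⟨hy, hk⟩
            simp only [Set.mem_singleton_iff] at hk
            subst hk
            exact hy
          have := measure_mono_null hsub hG1c
          rw [Measure.prod_prod, m2_singleton] at this
          rcases mul_eq_zero.1 this with h | h
          · exact h
          · exact absurd h (by norm_num)
        rw [ae_iff]
        refine measure_mono_null (fun x hx => ?_) (measure_union_null (hE 0) (hE 1))
        simp only [Set.mem_setOf_eq, not_and_or] at hx
        rcases hx with h | h
        · exact Or.inl h
        · exact Or.inr h
      set u : odoGroup lam → ZMod 2 := fun x => f (x, 0) with hudef
      set v : odoGroup lam → ZMod 2 := fun x => f (x, 0) + f (x, 1) with hvdef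
      have hum : Measurable u := hfm.comp (measurable_id.prodMk measurable_const)
      have hvm : Measurable v := by
        exact (measurable_of_countable fun p : ZMod 2 × ZMod 2 => p.1 + p.2).comp
          ((hfm.comp (measurable_id.prodMk measurable_const)).prodMk
            (hfm.comp (measurable_id.prodMk measurable_const)))
      have hf1 : ∀ y : odoGroup lam, f (y, 1) = u y + v y := by
        intro y
        rw [hudef, hvdef]
        simp only []
        rw [← add_assoc, zmod2_add_self, zero_add]
      -- pointwise equations
      have key1 : ∀ a b d ev ps : ZMod 2, a = ps + d → a + b = ps + (d + ev) → b = ev := by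
        decide
      have key2 : ∀ a b d ev ps : ZMod 2, a + b = ps + d → a = ps + (d + ev) → b = ev := by
        decide
      have heqs : ∀ᵐ x ∂mX, (v (T x) = v x ∧
          u (T x) = ψ (x + c) + u x + v x * φ x) := by
        filter_upwards [hboth] with x hx
        obtain ⟨hx0, hx1⟩ := hx
        have e0 := hfeq (x, 0) hx0
        have e1 := hfeq (x, 1) hx1
        simp only [hTφdef] at e0 e1
        rw [add_zero] at e0
        have hfx1 : f (x, 1) = u x + v x := hf1 x
        rcases zmod2_cases (φ x) with hφ0 | hφ1
        · rw [hφ0] at e0 e1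
          have e0' : u (T x) = ψ (x + c) + u x := e0
          have e1' : u (T x) + v (T x) = ψ (x + c) + (u x + v x) := by
            rw [← hf1 (T x), ← hfx1]
            rw [zero_add] at e1
            exact e1
          have hv : v (T x) = v x := key1 _ _ _ _ _ e0' e1'
          refine ⟨hv, ?_⟩
          rw [hφ0, mul_zero, add_zero]
          exact e0'
        · rw [hφ1] at e0 e1
          have e0' : u (T x) + v (T x) = ψ (x + c) + u x := by
            rw [← hf1 (T x)]; exact e0
          have h11 : (1 : ZMod 2) + 1 = 0 := by decide
          have e1' : u (T x) = ψ (x + c) + (u x + v x) := by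
            rw [h11] at e1
            rw [hfx1] at e1
            exact e1
          have hv : v (T x) = v x := key2 _ _ _ _ _ e0' e1'
          refine ⟨hv, ?_⟩
          rw [hφ1, mul_one, e1', add_assoc]
      have hvinv : (fun x => v (T x)) =ᵐ[mX] v := by
        filter_upwards [heqs] with x hx
        exact hx.1
      have hergT : Ergodic T mX := ergodic_odoT hTφ
      rcases aeconst_zmod2 hergT hvm hvinv with hv0 | hv1
      · -- v ≡ 0 : ψ(·+c) is a coboundary, contradicting ergodicity of Tψ
        refine no_coboundary hψ hHaar hTψ c hum ?_
        filter_upwards [heqs, hv0] with x hx hx0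
        rw [hx.2, hx0, zero_mul, add_zero]
      · -- v ≡ 1 : φ + ψ(·+c) is a coboundary, contradicting hnc
        refine hnc c u hum ?_
        filter_upwards [heqs, hv1] with x hx hx1
        rw [hx.2, hx1, one_mul]
        abel
  · -- B conull ⟹ s conull
    right
    have hBc : (mX.prod m2) Bᶜ = 0 := ae_eq_univ.1 hB1
    have hsub : p13 ⁻¹' B ⊆ s := by
      rintro ⟨x, g, h⟩ hq
      obtain ⟨h0, h1⟩ := hq
      rcases zmod2_cases h with hh | hh
      · rw [hh]; exact h0
      · rw [hh]; exact h1
    have h1 : (mX.prod (m2.prod m2)) (p13 ⁻¹' B) = 1 := by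
      rw [← Measure.map_apply hp13m hBm, hp13map]
      have : (mX.prod m2) B = 1 := by
        have := (measure_congr hB1).trans measure_univ
        exact this
      exact this
    refine le_antisymm prob_le_one ?_
    rw [← h1]
    exact measure_mono hsub

end RelProd
section CentIso

open Set Filter

set_option linter.unusedSectionVars false
set_option synthInstance.maxHeartbeats 1000000
set_option maxHeartbeats 1000000

variable {lam : ℕ → ℕ} {mX : Measure (odoGroup lam)} [IsProbabilityMeasure mX]

lemma centralizer_ae_translation (hlam : ∀ t, 2 ≤ lam t)
    (hT : Ergodic (odoT lam) mX) {R : odoGroup lam → odoGroup lam}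
    (hR : R ∈ Centralizer (odoT lam) mX) :
    ∃ c, R =ᵐ[mX] fun x => x + c := by
  obtain ⟨hRmp, hRinv, hRcomm⟩ := hR
  set G : odoGroup lam → odoGroup lam := fun x => R x - x with hGdef
  have hGm : Measurable G := by
    refine measurable_into_odo fun t => ?_
    exact (measurable_of_countable
        (fun p : ZMod (nseq lam t) × ZMod (nseq lam t) => p.1 - p.2)).comp
      (((measurable_odo_coord t).comp hRmp.measurable).prodMk (measurable_odo_coord t))
  have hGinv : (fun x => G (odoT lam x)) =ᵐ[mX] G := by
    filter_upwards [hRcomm] with x hx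
    show R (odoT lam x) - odoT lam x = R x - x
    have hx' : R (odoT lam x) = odoT lam (R x) := hx
    rw [hx']
    show R x + odoTheta lam - (x + odoTheta lam) = R x - x
    abel
  obtain ⟨c, hc⟩ := aeconst_odo hlam hT hGm hGinv
  refine ⟨c, ?_⟩
  filter_upwards [hc] with x hx
  have hx' : R x - x = c := hx
  rw [← sub_eq_iff_eq_add'.1 hx']

lemma translation_mem_centralizer
    (hHaar : ∀ g : odoGroup lam, Measure.map (fun x => x + g) mX = mX)
    (c : odoGroup lam) :
    (fun x : odoGroup lam => x + c) ∈ Centralizer (odoT lam) mX := by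
  refine ⟨mp_translate hHaar c, ⟨fun x => x + (-c), mp_translate hHaar (-c), ?_, ?_⟩, ?_⟩
  · exact Filter.Eventually.of_forall fun x => by
      show x + c + -c = x; abel
  · exact Filter.Eventually.of_forall fun x => by
      show x + -c + c = x; abel
  · exact Filter.Eventually.of_forall fun x => by
      show odoT lam x + c = odoT lam (x + c)
      show x + odoTheta lam + c = x + c + odoTheta lam
      abel

lemma iso_of_coboundary
    (hHaar : ∀ g : odoGroup lam, Measure.map (fun x => x + g) mX = mX)
    {φ ψ : odoGroup lam → ZMod 2} (hφ : Measurable φ) (hψ : Measurable ψ)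
    (c : odoGroup lam) {f : odoGroup lam → ZMod 2} (hf : Measurable f)
    (hcob : ∀ᵐ x ∂mX, f (odoT lam x) = f x + φ x + ψ (x + c)) :
    MeasIso (fun p : odoGroup lam × ZMod 2 => (odoT lam p.1, φ p.1 + p.2))
      (fun p : odoGroup lam × ZMod 2 => (odoT lam p.1, ψ p.1 + p.2)) (mX.prod m2) := by
  have hsubmp : MeasurePreserving (fun x : odoGroup lam => x - c) mX mX := by
    have heq : (fun x : odoGroup lam => x - c) = fun x => x + (-c) :=
      funext fun x => sub_eq_add_neg x c
    rw [heq]; exact mp_translate hHaar (-c)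
  refine ⟨fun p => (p.1 + c, f p.1 + p.2),
    skew_measurePreserving (mp_translate hHaar c) hf m2_map_add,
    ⟨fun p => (p.1 - c, f (p.1 - c) + p.2),
      skew_measurePreserving hsubmp (hf.comp (measurable_odo_sub c)) m2_map_add, ?_, ?_⟩, ?_⟩
  · refine Filter.Eventually.of_forall fun p => ?_
    show (p.1 + c - c, f (p.1 + c - c) + (f p.1 + p.2)) = p
    have h1 : p.1 + c - c = p.1 := by abel
    rw [h1, ← add_assoc, zmod2_add_self, zero_add]
  · refine Filter.Eventually.of_forall fun p => ?_
    show (p.1 - c + c, f (p.1 - c) + (f (p.1 - c) + p.2)) = p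
    have h1 : p.1 - c + c = p.1 := by abel
    rw [← add_assoc, zmod2_add_self, zero_add, h1]
  · have hbad : (mX.prod m2)
        ({x : odoGroup lam | ¬ f (odoT lam x) = f x + φ x + ψ (x + c)}
          ×ˢ (Set.univ : Set (ZMod 2))) = 0 := by
      rw [Measure.prod_prod]
      rw [ae_iff.1 hcob, zero_mul]
    have hgood : ∀ᵐ p ∂(mX.prod m2), f (odoT lam p.1) = f p.1 + φ p.1 + ψ (p.1 + c) := by
      rw [ae_iff]
      refine measure_mono_null (fun p hp => ?_) hbad
      exact ⟨hp, trivial⟩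
    filter_upwards [hgood] with p hp
    show (odoT lam p.1 + c, f (odoT lam p.1) + (φ p.1 + p.2))
        = (odoT lam (p.1 + c), ψ (p.1 + c) + (f p.1 + p.2))
    have h1 : odoT lam p.1 + c = odoT lam (p.1 + c) := by
      show p.1 + odoTheta lam + c = p.1 + c + odoTheta lam
      abel
    have key : ∀ a b q g : ZMod 2, (a + b + q) + (b + g) = q + (a + g) := by decide
    rw [Prod.mk.injEq]
    exact ⟨h1, by rw [hp]; exact key (f p.1) (φ p.1) (ψ (p.1 + c)) p.2⟩

end CentIso
section Joinings

open Set Filter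

set_option linter.unusedSectionVars false
set_option synthInstance.maxHeartbeats 1000000
set_option maxHeartbeats 1000000

variable {lam : ℕ → ℕ} {mX : Measure (odoGroup lam)} [IsProbabilityMeasure mX]

lemma z22_add_self : ∀ a : ZMod 2 × ZMod 2, a + a = 0 := by decide

lemma measurable_rebuild (c : odoGroup lam) :
    Measurable (fun q : odoGroup lam × (ZMod 2 × ZMod 2) =>
      ((q.1, q.2.1), (q.1 + c, q.2.2))) := by
  refine Measurable.prodMk (measurable_fst.prodMk (measurable_fst.comp measurable_snd)) ?_
  exact ((measurable_odo_add c).comp measurable_fst).prodMk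
    (measurable_snd.comp measurable_snd)

lemma map_p13 :
    Measure.map (Prod.map (id : odoGroup lam → odoGroup lam) (Prod.fst : ZMod 2 × ZMod 2 → ZMod 2))
      (mX.prod (m2.prod m2)) = mX.prod m2 := by
  rw [← Measure.map_prod_map _ _ measurable_id measurable_fst, Measure.map_id,
    Measure.map_fst_prod]
  simp

/-- The relatively independent extension over the graph joining given by translation by `c`
is an ergodic joining (assuming no coboundary relation). -/
lemma rel_mem_joinings {φ ψ : odoGroup lam → ZMod 2} (hφ : Measurable φ) (hψ : Measurable ψ)
    (hHaar : ∀ g : odoGroup lam, Measure.map (fun x => x + g) mX = mX)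
    (hTφ : Ergodic (fun p : odoGroup lam × ZMod 2 => (odoT lam p.1, φ p.1 + p.2)) (mX.prod m2))
    (hTψ : Ergodic (fun p : odoGroup lam × ZMod 2 => (odoT lam p.1, ψ p.1 + p.2)) (mX.prod m2))
    (hnc : ∀ (c : odoGroup lam) (f : odoGroup lam → ZMod 2), Measurable f →
      ¬ (∀ᵐ x ∂mX, f (odoT lam x) = f x + φ x + ψ (x + c)))
    (c : odoGroup lam) :
    (IsProbabilityMeasure (Measure.map (fun q : odoGroup lam × (ZMod 2 × ZMod 2) =>
        ((q.1, q.2.1), (q.1 + c, q.2.2))) (mX.prod (m2.prod m2)))) ∧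
    (Measure.map (Prod.map (fun p : odoGroup lam × ZMod 2 => (odoT lam p.1, φ p.1 + p.2))
        (fun p : odoGroup lam × ZMod 2 => (odoT lam p.1, ψ p.1 + p.2)))
      (Measure.map (fun q : odoGroup lam × (ZMod 2 × ZMod 2) =>
        ((q.1, q.2.1), (q.1 + c, q.2.2))) (mX.prod (m2.prod m2)))
      = Measure.map (fun q : odoGroup lam × (ZMod 2 × ZMod 2) =>
        ((q.1, q.2.1), (q.1 + c, q.2.2))) (mX.prod (m2.prod m2))) ∧
    (Measure.map Prod.fst (Measure.map (fun q : odoGroup lam × (ZMod 2 × ZMod 2) =>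
        ((q.1, q.2.1), (q.1 + c, q.2.2))) (mX.prod (m2.prod m2))) = mX.prod m2) ∧
    (Measure.map Prod.snd (Measure.map (fun q : odoGroup lam × (ZMod 2 × ZMod 2) =>
        ((q.1, q.2.1), (q.1 + c, q.2.2))) (mX.prod (m2.prod m2))) = mX.prod m2) ∧
    Ergodic (Prod.map (fun p : odoGroup lam × ZMod 2 => (odoT lam p.1, φ p.1 + p.2))
        (fun p : odoGroup lam × ZMod 2 => (odoT lam p.1, ψ p.1 + p.2)))
      (Measure.map (fun q : odoGroup lam × (ZMod 2 × ZMod 2) =>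
        ((q.1, q.2.1), (q.1 + c, q.2.2))) (mX.prod (m2.prod m2))) := by
  have hSc : Ergodic (fun p : odoGroup lam × (ZMod 2 × ZMod 2) =>
      (odoT lam p.1, ((φ p.1, ψ (p.1 + c)) : ZMod 2 × ZMod 2) + p.2))
      (mX.prod (m2.prod m2)) := relProd_ergodic hφ hψ hHaar hTφ hTψ hnc c
  have hFm : Measurable (fun q : odoGroup lam × (ZMod 2 × ZMod 2) =>
      ((q.1, q.2.1), (q.1 + c, q.2.2))) := measurable_rebuild c
  have hEm : Measurable (Prod.map
      (fun p : odoGroup lam × ZMod 2 => (odoT lam p.1, φ p.1 + p.2))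
      (fun p : odoGroup lam × ZMod 2 => (odoT lam p.1, ψ p.1 + p.2))) := by
    refine Measurable.prodMap ?_ ?_
    · exact (measurable_odoT.comp measurable_fst).prodMk
        ((measurable_of_countable fun q : ZMod 2 × ZMod 2 => q.1 + q.2).comp
          ((hφ.comp measurable_fst).prodMk measurable_snd))
    · exact (measurable_odoT.comp measurable_fst).prodMk
        ((measurable_of_countable fun q : ZMod 2 × ZMod 2 => q.1 + q.2).comp
          ((hψ.comp measurable_fst).prodMk measurable_snd))
  have hcomm : ∀ q : odoGroup lam × (ZMod 2 × ZMod 2),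
      (Prod.map (fun p : odoGroup lam × ZMod 2 => (odoT lam p.1, φ p.1 + p.2))
        (fun p : odoGroup lam × ZMod 2 => (odoT lam p.1, ψ p.1 + p.2)))
        ((fun q : odoGroup lam × (ZMod 2 × ZMod 2) => ((q.1, q.2.1), (q.1 + c, q.2.2))) q)
      = (fun q : odoGroup lam × (ZMod 2 × ZMod 2) => ((q.1, q.2.1), (q.1 + c, q.2.2)))
        ((fun p : odoGroup lam × (ZMod 2 × ZMod 2) =>
          (odoT lam p.1, ((φ p.1, ψ (p.1 + c)) : ZMod 2 × ZMod 2) + p.2)) q) := by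
    rintro ⟨x, g, h⟩
    show ((odoT lam x, φ x + g), (odoT lam (x + c), ψ (x + c) + h))
      = ((odoT lam x, ((φ x, ψ (x + c)) + (g, h)).1), (odoT lam x + c, ((φ x, ψ (x + c)) + (g, h)).2))
    have h1 : odoT lam (x + c) = odoT lam x + c := by
      show x + c + odoTheta lam = x + odoTheta lam + c
      abel
    rw [Prod.mk_add_mk, h1]
  have hmapinv : Measure.map (Prod.map
      (fun p : odoGroup lam × ZMod 2 => (odoT lam p.1, φ p.1 + p.2))
      (fun p : odoGroup lam × ZMod 2 => (odoT lam p.1, ψ p.1 + p.2)))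
      (Measure.map (fun q : odoGroup lam × (ZMod 2 × ZMod 2) =>
        ((q.1, q.2.1), (q.1 + c, q.2.2))) (mX.prod (m2.prod m2)))
      = Measure.map (fun q : odoGroup lam × (ZMod 2 × ZMod 2) =>
        ((q.1, q.2.1), (q.1 + c, q.2.2))) (mX.prod (m2.prod m2)) := by
    rw [Measure.map_map hEm hFm]
    have : (Prod.map (fun p : odoGroup lam × ZMod 2 => (odoT lam p.1, φ p.1 + p.2))
          (fun p : odoGroup lam × ZMod 2 => (odoT lam p.1, ψ p.1 + p.2)))
        ∘ (fun q : odoGroup lam × (ZMod 2 × ZMod 2) => ((q.1, q.2.1), (q.1 + c, q.2.2)))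
        = (fun q : odoGroup lam × (ZMod 2 × ZMod 2) => ((q.1, q.2.1), (q.1 + c, q.2.2)))
        ∘ (fun p : odoGroup lam × (ZMod 2 × ZMod 2) =>
          (odoT lam p.1, ((φ p.1, ψ (p.1 + c)) : ZMod 2 × ZMod 2) + p.2)) := funext hcomm
    rw [this, ← Measure.map_map hFm hSc.measurable, hSc.map_eq]
  refine ⟨Measure.isProbabilityMeasure_map hFm.aemeasurable, hmapinv, ?_, ?_, ?_⟩
  · rw [Measure.map_map measurable_fst hFm]
    have : (Prod.fst ∘ fun q : odoGroup lam × (ZMod 2 × ZMod 2) =>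
        ((q.1, q.2.1), (q.1 + c, q.2.2)))
        = Prod.map (id : odoGroup lam → odoGroup lam) (Prod.fst : ZMod 2 × ZMod 2 → ZMod 2) :=
      funext fun q => rfl
    rw [this, map_p13]
  · rw [Measure.map_map measurable_snd hFm]
    have : (Prod.snd ∘ fun q : odoGroup lam × (ZMod 2 × ZMod 2) =>
        ((q.1, q.2.1), (q.1 + c, q.2.2)))
        = Prod.map (fun x : odoGroup lam => x + c) (Prod.snd : ZMod 2 × ZMod 2 → ZMod 2) :=
      funext fun q => rfl
    rw [this, ← Measure.map_prod_map _ _ (measurable_odo_add c) measurable_snd, hHaar c,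
      Measure.map_snd_prod]
    simp
  · exact Ergodic.map_of_comm hSc hFm hEm fun q => (hcomm q).symm

end Joinings
section JoiningClassify

open Set Filter

set_option linter.unusedSectionVars false
set_option synthInstance.maxHeartbeats 1000000
set_option maxHeartbeats 2000000

variable {lam : ℕ → ℕ} {mX : Measure (odoGroup lam)} [IsProbabilityMeasure mX]

/-- Every ergodic joining is a relatively independent extension of a graph joining. -/
lemma joining_is_rel (hlam : ∀ t, 2 ≤ lam t)
    {φ ψ : odoGroup lam → ZMod 2} (hφ : Measurable φ) (hψ : Measurable ψ)
    (hHaar : ∀ g : odoGroup lam, Measure.map (fun x => x + g) mX = mX)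
    (hTφ : Ergodic (fun p : odoGroup lam × ZMod 2 => (odoT lam p.1, φ p.1 + p.2)) (mX.prod m2))
    (hTψ : Ergodic (fun p : odoGroup lam × ZMod 2 => (odoT lam p.1, ψ p.1 + p.2)) (mX.prod m2))
    (hnc : ∀ (c : odoGroup lam) (f : odoGroup lam → ZMod 2), Measurable f →
      ¬ (∀ᵐ x ∂mX, f (odoT lam x) = f x + φ x + ψ (x + c)))
    {ρ : Measure ((odoGroup lam × ZMod 2) × (odoGroup lam × ZMod 2))}
    (hprob : IsProbabilityMeasure ρ)
    (hinv : Measure.map (Prod.map (fun p : odoGroup lam × ZMod 2 => (odoT lam p.1, φ p.1 + p.2))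
      (fun p : odoGroup lam × ZMod 2 => (odoT lam p.1, ψ p.1 + p.2))) ρ = ρ)
    (hfst : Measure.map Prod.fst ρ = mX.prod m2)
    (hsnd : Measure.map Prod.snd ρ = mX.prod m2)
    (herg : Ergodic (Prod.map (fun p : odoGroup lam × ZMod 2 => (odoT lam p.1, φ p.1 + p.2))
      (fun p : odoGroup lam × ZMod 2 => (odoT lam p.1, ψ p.1 + p.2))) ρ) :
    ∃ R : odoGroup lam → odoGroup lam, R ∈ Centralizer (odoT lam) mX ∧
      ρ = Measure.map (fun q : odoGroup lam × (ZMod 2 × ZMod 2) =>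
        ((q.1, q.2.1), (R q.1, q.2.2))) (mX.prod (m2.prod m2)) := by
  classical
  haveI := hprob
  have hEm : Measurable (Prod.map
      (fun p : odoGroup lam × ZMod 2 => (odoT lam p.1, φ p.1 + p.2))
      (fun p : odoGroup lam × ZMod 2 => (odoT lam p.1, ψ p.1 + p.2))) := by
    refine Measurable.prodMap ?_ ?_
    · exact (measurable_odoT.comp measurable_fst).prodMk
        ((measurable_of_countable fun q : ZMod 2 × ZMod 2 => q.1 + q.2).comp
          ((hφ.comp measurable_fst).prodMk measurable_snd))
    · exact (measurable_odoT.comp measurable_fst).prodMk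
        ((measurable_of_countable fun q : ZMod 2 × ZMod 2 => q.1 + q.2).comp
          ((hψ.comp measurable_fst).prodMk measurable_snd))
  -- Step 1: the base joining is a graph
  have hFm : Measurable (fun ω : (odoGroup lam × ZMod 2) × (odoGroup lam × ZMod 2) =>
      ω.2.1 - ω.1.1) := by
    refine measurable_into_odo fun t => ?_
    exact (measurable_of_countable
        (fun p : ZMod (nseq lam t) × ZMod (nseq lam t) => p.1 - p.2)).comp
      (((measurable_odo_coord t).comp (measurable_fst.comp measurable_snd)).prodMk
        ((measurable_odo_coord t).comp (measurable_fst.comp measurable_fst)))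
  have hFinv : (fun ω : (odoGroup lam × ZMod 2) × (odoGroup lam × ZMod 2) =>
      (fun ω' : (odoGroup lam × ZMod 2) × (odoGroup lam × ZMod 2) => ω'.2.1 - ω'.1.1)
        ((Prod.map (fun p : odoGroup lam × ZMod 2 => (odoT lam p.1, φ p.1 + p.2))
          (fun p : odoGroup lam × ZMod 2 => (odoT lam p.1, ψ p.1 + p.2))) ω))
      =ᵐ[ρ] fun ω => ω.2.1 - ω.1.1 := by
    refine Filter.Eventually.of_forall fun ω => ?_
    show odoT lam ω.2.1 - odoT lam ω.1.1 = ω.2.1 - ω.1.1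
    show ω.2.1 + odoTheta lam - (ω.1.1 + odoTheta lam) = ω.2.1 - ω.1.1
    abel
  obtain ⟨c, hc⟩ := aeconst_odo hlam herg hFm hFinv
  have hM : ∀ᵐ ω ∂ρ, ω.2.1 = ω.1.1 + c := by
    filter_upwards [hc] with ω hω
    have h1 : ω.2.1 - ω.1.1 = c := hω
    exact (sub_eq_iff_eq_add.1 h1).trans (add_comm c ω.1.1)
  -- Step 2: the fibered joining over the diagonal
  have hπm : Measurable (fun ω : (odoGroup lam × ZMod 2) × (odoGroup lam × ZMod 2) =>
      (ω.1.1, (ω.1.2, ω.2.2))) := by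
    exact (measurable_fst.comp measurable_fst).prodMk
      ((measurable_snd.comp measurable_fst).prodMk (measurable_snd.comp measurable_snd))
  set ν : Measure (odoGroup lam × (ZMod 2 × ZMod 2)) :=
    Measure.map (fun ω : (odoGroup lam × ZMod 2) × (odoGroup lam × ZMod 2) =>
      (ω.1.1, (ω.1.2, ω.2.2))) ρ with hνdef
  haveI : IsProbabilityMeasure ν := Measure.isProbabilityMeasure_map hπm.aemeasurable
  have hScE : Ergodic (fun p : odoGroup lam × (ZMod 2 × ZMod 2) =>
      (odoT lam p.1, ((φ p.1, ψ (p.1 + c)) : ZMod 2 × ZMod 2) + p.2))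
      (mX.prod (m2.prod m2)) := relProd_ergodic hφ hψ hHaar hTφ hTψ hnc c
  have hScm := hScE.measurable
  have hνinv : Measure.map (fun p : odoGroup lam × (ZMod 2 × ZMod 2) =>
      (odoT lam p.1, ((φ p.1, ψ (p.1 + c)) : ZMod 2 × ZMod 2) + p.2)) ν = ν := by
    rw [hνdef, Measure.map_map hScm hπm]
    have hae : ((fun p : odoGroup lam × (ZMod 2 × ZMod 2) =>
        (odoT lam p.1, ((φ p.1, ψ (p.1 + c)) : ZMod 2 × ZMod 2) + p.2))
        ∘ (fun ω : (odoGroup lam × ZMod 2) × (odoGroup lam × ZMod 2) =>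
          (ω.1.1, (ω.1.2, ω.2.2))))
        =ᵐ[ρ] ((fun ω : (odoGroup lam × ZMod 2) × (odoGroup lam × ZMod 2) =>
          (ω.1.1, (ω.1.2, ω.2.2)))
          ∘ (Prod.map (fun p : odoGroup lam × ZMod 2 => (odoT lam p.1, φ p.1 + p.2))
            (fun p : odoGroup lam × ZMod 2 => (odoT lam p.1, ψ p.1 + p.2)))) := by
      filter_upwards [hM] with ω hω
      show (odoT lam ω.1.1, (φ ω.1.1, ψ (ω.1.1 + c)) + (ω.1.2, ω.2.2))
        = (odoT lam ω.1.1, (φ ω.1.1 + ω.1.2, ψ ω.2.1 + ω.2.2))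
      rw [Prod.mk_add_mk, hω]
    rw [Measure.map_congr hae, ← Measure.map_map hπm hEm, hinv]
  -- absolute continuity
  have hνac : ν ≪ mX.prod (m2.prod m2) := by
    refine Measure.AbsolutelyContinuous.mk fun s hs hs0 => ?_
    have hsecm : ∀ p : ZMod 2 × ZMod 2,
        MeasurableSet ((fun x : odoGroup lam => (x, p)) ⁻¹' s) := fun p =>
      (measurable_id.prodMk measurable_const) hs
    have hsec0 : ∀ p : ZMod 2 × ZMod 2, mX ((fun x : odoGroup lam => (x, p)) ⁻¹' s) = 0 := by
      intro p
      have hsub : ((fun x : odoGroup lam => (x, p)) ⁻¹' s) ×ˢ ({p} : Set (ZMod 2 × ZMod 2))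
          ⊆ s := by
        rintro ⟨x, q⟩ ⟨hx, hq⟩
        simp only [Set.mem_singleton_iff] at hq
        subst hq
        exact hx
      have h0 := measure_mono_null hsub hs0
      rw [Measure.prod_prod, m22_singleton] at h0
      rcases mul_eq_zero.1 h0 with h | h
      · exact h
      · exact absurd h (by norm_num)
    have hpiece : ∀ p : ZMod 2 × ZMod 2,
        ν (((fun x : odoGroup lam => (x, p)) ⁻¹' s) ×ˢ ({p} : Set (ZMod 2 × ZMod 2))) = 0 := by
      intro p
      refine le_antisymm ?_ zero_le
      have hsub2 : (((fun x : odoGroup lam => (x, p)) ⁻¹' s) ×ˢ ({p} : Set (ZMod 2 × ZMod 2)))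
          ⊆ (((fun x : odoGroup lam => (x, p)) ⁻¹' s)
            ×ˢ (({p.1} : Set (ZMod 2)) ×ˢ (Set.univ : Set (ZMod 2)))) := by
        rintro ⟨x, q⟩ ⟨hx, hq⟩
        simp only [Set.mem_singleton_iff] at hq
        subst hq
        exact ⟨hx, rfl, trivial⟩
      refine (measure_mono hsub2).trans ?_
      have hkey : ν (((fun x : odoGroup lam => (x, p)) ⁻¹' s)
            ×ˢ (({p.1} : Set (ZMod 2)) ×ˢ (Set.univ : Set (ZMod 2))))
          = (mX.prod m2) (((fun x : odoGroup lam => (x, p)) ⁻¹' s)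
            ×ˢ ({p.1} : Set (ZMod 2))) := by
        rw [hνdef, Measure.map_apply hπm
          ((hsecm p).prod ((measurableSet_singleton p.1).prod MeasurableSet.univ)),
          ← hfst, Measure.map_apply measurable_fst ((hsecm p).prod (measurableSet_singleton p.1))]
        congr 1
        ext ω
        simp only [Set.mem_preimage, Set.mem_prod, Set.mem_singleton_iff, Set.mem_univ,
          and_true]
      rw [hkey, Measure.prod_prod, hsec0 p, zero_mul]
    have hcover : s ⊆ ⋃ p : ZMod 2 × ZMod 2,
        (((fun x : odoGroup lam => (x, p)) ⁻¹' s) ×ˢ ({p} : Set (ZMod 2 × ZMod 2))) := by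
      rintro ⟨x, q⟩ hx
      exact Set.mem_iUnion.2 ⟨q, ⟨hx, rfl⟩⟩
    exact measure_mono_null hcover (measure_iUnion_null fun p => hpiece p)
  -- the density is invariant, hence 1
  have hfm := Measure.measurable_rnDeriv ν (mX.prod (m2.prod m2))
  have hsubθ : MeasurePreserving (fun x : odoGroup lam => x - odoTheta lam) mX mX := by
    have heq : (fun x : odoGroup lam => x - odoTheta lam) = fun x => x + (-odoTheta lam) :=
      funext fun x => sub_eq_add_neg x _
    rw [heq]
    exact mp_translate hHaar _
  have hSinvm : MeasurePreserving (fun p : odoGroup lam × (ZMod 2 × ZMod 2) =>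
      (p.1 - odoTheta lam, ((φ (p.1 - odoTheta lam), ψ ((p.1 - odoTheta lam) + c))
        : ZMod 2 × ZMod 2) + p.2)) (mX.prod (m2.prod m2)) (mX.prod (m2.prod m2)) := by
    exact skew_measurePreserving
      (σ := fun x : odoGroup lam =>
        ((φ (x - odoTheta lam), ψ ((x - odoTheta lam) + c)) : ZMod 2 × ZMod 2))
      hsubθ
      ((hφ.comp (measurable_odo_sub _)).prodMk
        (hψ.comp ((measurable_odo_add c).comp (measurable_odo_sub _))))
      m22_map_add
  have hScSinv : ∀ p : odoGroup lam × (ZMod 2 × ZMod 2),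
      (fun p : odoGroup lam × (ZMod 2 × ZMod 2) =>
        (p.1 - odoTheta lam, ((φ (p.1 - odoTheta lam), ψ ((p.1 - odoTheta lam) + c))
          : ZMod 2 × ZMod 2) + p.2))
      ((fun p : odoGroup lam × (ZMod 2 × ZMod 2) =>
        (odoT lam p.1, ((φ p.1, ψ (p.1 + c)) : ZMod 2 × ZMod 2) + p.2)) p) = p := by
    rintro ⟨x, q⟩
    have h1 : odoT lam x - odoTheta lam = x := by
      show x + odoTheta lam - odoTheta lam = x
      abel
    show (odoT lam x - odoTheta lam,
      (φ (odoT lam x - odoTheta lam), ψ ((odoT lam x - odoTheta lam) + c))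
        + ((φ x, ψ (x + c)) + q)) = (x, q)
    rw [h1, ← add_assoc, z22_add_self, zero_add]
  have hint : ∫⁻ x, (ν.rnDeriv (mX.prod (m2.prod m2))) x ∂(mX.prod (m2.prod m2)) = 1 := by
    rw [Measure.lintegral_rnDeriv hνac]
    exact measure_univ
  have hfae : (ν.rnDeriv (mX.prod (m2.prod m2))) =ᵐ[mX.prod (m2.prod m2)]
      fun x => (ν.rnDeriv (mX.prod (m2.prod m2)))
        ((fun p : odoGroup lam × (ZMod 2 × ZMod 2) =>
          (p.1 - odoTheta lam, ((φ (p.1 - odoTheta lam), ψ ((p.1 - odoTheta lam) + c))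
            : ZMod 2 × ZMod 2) + p.2)) x) := by
    refine ae_eq_of_forall_setLIntegral_eq_of_sigmaFinite hfm (hfm.comp hSinvm.measurable) ?_
    intro s hs _
    rw [Measure.setLIntegral_rnDeriv hνac]
    have h1 := hScE.toMeasurePreserving.setLIntegral_comp_preimage (f := fun x =>
      (ν.rnDeriv (mX.prod (m2.prod m2)))
        ((fun p : odoGroup lam × (ZMod 2 × ZMod 2) =>
          (p.1 - odoTheta lam, ((φ (p.1 - odoTheta lam), ψ ((p.1 - odoTheta lam) + c))
            : ZMod 2 × ZMod 2) + p.2)) x)) hs (by exact hfm.comp hSinvm.measurable)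
    rw [← h1]
    have h2 : ∀ x : odoGroup lam × (ZMod 2 × ZMod 2),
        (ν.rnDeriv (mX.prod (m2.prod m2)))
          ((fun p : odoGroup lam × (ZMod 2 × ZMod 2) =>
            (p.1 - odoTheta lam, ((φ (p.1 - odoTheta lam), ψ ((p.1 - odoTheta lam) + c))
              : ZMod 2 × ZMod 2) + p.2))
            ((fun p : odoGroup lam × (ZMod 2 × ZMod 2) =>
              (odoT lam p.1, ((φ p.1, ψ (p.1 + c)) : ZMod 2 × ZMod 2) + p.2)) x))
        = (ν.rnDeriv (mX.prod (m2.prod m2))) x := fun x => by rw [hScSinv x]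
    rw [lintegral_congr h2, Measure.setLIntegral_rnDeriv hνac,
      ← Measure.map_apply hScm hs, hνinv]
  have hfinv : (fun x => (ν.rnDeriv (mX.prod (m2.prod m2)))
      ((fun p : odoGroup lam × (ZMod 2 × ZMod 2) =>
        (odoT lam p.1, ((φ p.1, ψ (p.1 + c)) : ZMod 2 × ZMod 2) + p.2)) x))
      =ᵐ[mX.prod (m2.prod m2)] ν.rnDeriv (mX.prod (m2.prod m2)) := by
    have h3 := hScE.toMeasurePreserving.quasiMeasurePreserving.ae_eq_comp hfae
    have h4 : ((fun x => (ν.rnDeriv (mX.prod (m2.prod m2)))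
        ((fun p : odoGroup lam × (ZMod 2 × ZMod 2) =>
          (p.1 - odoTheta lam, ((φ (p.1 - odoTheta lam), ψ ((p.1 - odoTheta lam) + c))
            : ZMod 2 × ZMod 2) + p.2)) x))
        ∘ (fun p : odoGroup lam × (ZMod 2 × ZMod 2) =>
          (odoT lam p.1, ((φ p.1, ψ (p.1 + c)) : ZMod 2 × ZMod 2) + p.2)))
        = ν.rnDeriv (mX.prod (m2.prod m2)) := by
      funext x
      show (ν.rnDeriv (mX.prod (m2.prod m2))) _ = _
      rw [hScSinv x]
    rw [h4] at h3
    refine h3.symm.mono fun x hx => ?_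
    exact hx.symm
  have hf1 : ν.rnDeriv (mX.prod (m2.prod m2)) =ᵐ[mX.prod (m2.prod m2)] fun _ => 1 :=
    ae_one_of_invariant hScE hfm hfinv hint
  have hνeq : ν = mX.prod (m2.prod m2) := by
    rw [← Measure.withDensity_rnDeriv_eq ν (mX.prod (m2.prod m2)) hνac,
      withDensity_congr_ae hf1]
    exact withDensity_one
  -- reconstruct ρ from ν
  have hrebm : Measurable (fun q : odoGroup lam × (ZMod 2 × ZMod 2) =>
      ((q.1, q.2.1), (q.1 + c, q.2.2))) := measurable_rebuild c
  have hreb : Measure.map (fun q : odoGroup lam × (ZMod 2 × ZMod 2) =>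
      ((q.1, q.2.1), (q.1 + c, q.2.2))) ν = ρ := by
    rw [hνdef, Measure.map_map hrebm hπm]
    have hae2 : ((fun q : odoGroup lam × (ZMod 2 × ZMod 2) =>
        ((q.1, q.2.1), (q.1 + c, q.2.2)))
        ∘ (fun ω : (odoGroup lam × ZMod 2) × (odoGroup lam × ZMod 2) =>
          (ω.1.1, (ω.1.2, ω.2.2)))) =ᵐ[ρ] id := by
      filter_upwards [hM] with ω hω
      show ((ω.1.1, ω.1.2), (ω.1.1 + c, ω.2.2)) = ω
      rw [← hω]
    rw [Measure.map_congr hae2, Measure.map_id]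
  refine ⟨fun x => x + c, translation_mem_centralizer hHaar c, ?_⟩
  have : ρ = Measure.map (fun q : odoGroup lam × (ZMod 2 × ZMod 2) =>
      ((q.1, q.2.1), (q.1 + c, q.2.2))) (mX.prod (m2.prod m2)) := by
    rw [← hνeq, hreb]
  exact this

end JoiningClassify

/-- **Joinings of two ergodic `ℤ/2ℤ`-extensions of an odometer.**
Let `T` be an odometer and `φ, ψ : X → ℤ/2ℤ` ergodic cocycles.  Then either `T_φ` and `T_ψ`
are isomorphic, or the ergodic joinings of `T_φ` and `T_ψ` are exactly the relatively
independent extensions of the graph joinings of `T`: the images of `m_X ⊗ m₂ ⊗ m₂` under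
`(x, g, h) ↦ ((x, g), (R x, h))` with `R ∈ C(T)`. -/
theorem stmt_10 (lam : ℕ → ℕ) (hlam : ∀ t, 2 ≤ lam t)
    (mX : Measure (odoGroup lam)) [IsProbabilityMeasure mX]
    (hHaar : ∀ g : odoGroup lam, Measure.map (fun x => x + g) mX = mX)
    (φ ψ : odoGroup lam → ZMod 2) (hφ : Measurable φ) (hψ : Measurable ψ)
    (hTφ : Ergodic (fun p : odoGroup lam × ZMod 2 => (odoT lam p.1, φ p.1 + p.2)) (mX.prod m2))
    (hTψ : Ergodic (fun p : odoGroup lam × ZMod 2 => (odoT lam p.1, ψ p.1 + p.2)) (mX.prod m2)) :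
    MeasIso (fun p : odoGroup lam × ZMod 2 => (odoT lam p.1, φ p.1 + p.2))
        (fun p : odoGroup lam × ZMod 2 => (odoT lam p.1, ψ p.1 + p.2)) (mX.prod m2) ∨
      {ρ : Measure ((odoGroup lam × ZMod 2) × (odoGroup lam × ZMod 2)) |
          IsProbabilityMeasure ρ ∧
          Measure.map (Prod.map (fun p : odoGroup lam × ZMod 2 => (odoT lam p.1, φ p.1 + p.2))
            (fun p : odoGroup lam × ZMod 2 => (odoT lam p.1, ψ p.1 + p.2))) ρ = ρ ∧
          Measure.map Prod.fst ρ = mX.prod m2 ∧ Measure.map Prod.snd ρ = mX.prod m2 ∧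
          Ergodic (Prod.map (fun p : odoGroup lam × ZMod 2 => (odoT lam p.1, φ p.1 + p.2))
            (fun p : odoGroup lam × ZMod 2 => (odoT lam p.1, ψ p.1 + p.2))) ρ} =
      {ρ : Measure ((odoGroup lam × ZMod 2) × (odoGroup lam × ZMod 2)) |
          ∃ R : odoGroup lam → odoGroup lam, R ∈ Centralizer (odoT lam) mX ∧
            ρ = Measure.map (fun q : odoGroup lam × (ZMod 2 × ZMod 2) =>
              ((q.1, q.2.1), (R q.1, q.2.2))) (mX.prod (m2.prod m2))} := by
  classical
  by_cases hP : ∃ (c : odoGroup lam) (f : odoGroup lam → ZMod 2), Measurable f ∧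
      ∀ᵐ x ∂mX, f (odoT lam x) = f x + φ x + ψ (x + c)
  · obtain ⟨c, f, hf, hcob⟩ := hP
    exact Or.inl (iso_of_coboundary hHaar hφ hψ c hf hcob)
  · right
    have hnc : ∀ (c : odoGroup lam) (f : odoGroup lam → ZMod 2), Measurable f →
        ¬ (∀ᵐ x ∂mX, f (odoT lam x) = f x + φ x + ψ (x + c)) := by
      intro c f hf hae
      exact hP ⟨c, f, hf, hae⟩
    ext ρ
    simp only [Set.mem_setOf_eq]
    constructor
    · rintro ⟨hprob, hinv, hfst, hsnd, herg⟩
      exact joining_is_rel hlam hφ hψ hHaar hTφ hTψ hnc hprob hinv hfst hsnd herg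
    · rintro ⟨R, hR, rfl⟩
      obtain ⟨c, hc⟩ := centralizer_ae_translation hlam (ergodic_odoT hTφ) hR
      have hmapeq : Measure.map (fun q : odoGroup lam × (ZMod 2 × ZMod 2) =>
          ((q.1, q.2.1), (R q.1, q.2.2))) (mX.prod (m2.prod m2))
          = Measure.map (fun q : odoGroup lam × (ZMod 2 × ZMod 2) =>
          ((q.1, q.2.1), (q.1 + c, q.2.2))) (mX.prod (m2.prod m2)) := by
        refine Measure.map_congr ?_
        have hbad : (mX.prod (m2.prod m2)) ({x : odoGroup lam | ¬ R x = x + c}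
            ×ˢ (Set.univ : Set (ZMod 2 × ZMod 2))) = 0 := by
          rw [Measure.prod_prod, ae_iff.1 hc, zero_mul]
        rw [Filter.EventuallyEq, ae_iff]
        refine measure_mono_null (fun q hq => ?_) hbad
        refine ⟨fun hRq => hq ?_, trivial⟩
        show ((q.1, q.2.1), (R q.1, q.2.2)) = ((q.1, q.2.1), (q.1 + c, q.2.2))
        rw [hRq]
      rw [hmapeq]
      obtain ⟨h1, h2, h3, h4, h5⟩ := rel_mem_joinings hφ hψ hHaar hTφ hTψ hnc c
      exact ⟨h1, h2, h3, h4, h5⟩
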